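/- arXiv:2111.08215 — 2 statements merged into one kernel-verified Lean document; each statement's English description precedes it below -/
import Mathlib

section
/- Define h : ℝ → ℝ by h(x) = (x − 5√x + 4)/24 − (√x/π)·(log(16x) + 2). Then h is monotonically increasing on the interval [10⁴, ∞). -/
/-!
Substituting `x = t²` removes the square roots: `h(t²) = (t² - 5t + 4)/24 - (t/π)(log(16t²) + 2)`,
whose derivative `(2t - 5)/24 - (log(16t²) + 4)/π` is positive for `t ≥ 100` because
`log(16t²) = 2 log(4t)` grows at most linearly with slope `1/50` (tangent line at `4t = 400`)
while `(2t - 5)/24` grows with slope `1/12`. Since `√` is increasing, `h` is increasing on `[10⁴, ∞)`.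
-/

open Real Set

noncomputable def hOfSq (t : ℝ) : ℝ :=
  (t ^ 2 - 5 * t + 4) / 24 - (t / π) * (log (16 * t ^ 2) + 2)

noncomputable def hOfSqDeriv (t : ℝ) : ℝ :=
  (2 * t - 5) / 24 - (log (16 * t ^ 2) + 4) / π

lemma hOfSq_sqrt {x : ℝ} (hx : 0 ≤ x) :
    hOfSq (√x) = (x - 5 * √x + 4) / 24 - (√x / π) * (log (16 * x) + 2) := by
  rw [hOfSq, sq_sqrt hx]

lemma hasDerivAt_log_sixteen_mul_sq {t : ℝ} (ht : t ≠ 0) :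
    HasDerivAt (fun t => log (16 * t ^ 2)) (2 / t) t := by
  have hsq : HasDerivAt (fun t : ℝ => 16 * t ^ 2) (16 * (2 * t)) t := by
    simpa using (hasDerivAt_pow 2 t).const_mul (16 : ℝ)
  refine ((hasDerivAt_log (by positivity)).comp t hsq).congr_deriv ?_
  field_simp

lemma hasDerivAt_hOfSq {t : ℝ} (ht : t ≠ 0) : HasDerivAt hOfSq (hOfSqDeriv t) t := by
  have hpoly : HasDerivAt (fun t : ℝ => (t ^ 2 - 5 * t + 4) / 24) ((2 * t - 5) / 24) t := by
    simpa using (((hasDerivAt_pow 2 t).sub ((hasDerivAt_id t).const_mul 5)).add_const 4).div_const 24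
  have hprod : HasDerivAt (fun t : ℝ => (t / π) * (log (16 * t ^ 2) + 2))
      (1 / π * (log (16 * t ^ 2) + 2) + t / π * (2 / t)) t :=
    ((hasDerivAt_id t).div_const π).mul ((hasDerivAt_log_sixteen_mul_sq ht).add_const 2)
  refine (hpoly.sub hprod).congr_deriv ?_
  rw [hOfSqDeriv]
  field_simp
  ring

lemma log_sixteen_mul_sq_le {t : ℝ} (ht : 0 < t) :
    log (16 * t ^ 2) ≤ t / 50 + 2 * (9 * log 2 - 1) := by
  have htangent : log (4 * t / 400) ≤ 4 * t / 400 - 1 := log_le_sub_one_of_pos (by positivity)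
  have h400 : log 400 ≤ 9 * log 2 := by
    calc log 400 ≤ log (2 ^ 9) := log_le_log (by norm_num) (by norm_num)
      _ = 9 * log 2 := by rw [log_pow]; norm_num
  rw [log_div (by positivity) (by norm_num)] at htangent
  rw [show 16 * t ^ 2 = (4 * t) ^ 2 by ring, log_pow]
  push_cast
  linarith

lemma hOfSqDeriv_pos {t : ℝ} (ht : 100 ≤ t) : 0 < hOfSqDeriv t := by
  have hlog := log_sixteen_mul_sq_le (t := t) (by linarith)
  rw [hOfSqDeriv, sub_pos, div_lt_div_iff₀ pi_pos (by norm_num)]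
  nlinarith [pi_gt_three, log_two_lt_d9]

lemma hOfSq_strictMonoOn : StrictMonoOn hOfSq (Ici 100) := by
  refine strictMonoOn_of_deriv_pos (convex_Ici _) ?_ ?_
  · exact fun t ht => (hasDerivAt_hOfSq (by linarith [mem_Ici.mp ht])).continuousAt.continuousWithinAt
  · intro t ht
    rw [interior_Ici] at ht
    rw [(hasDerivAt_hOfSq (by linarith [mem_Ioi.mp ht])).deriv]
    exact hOfSqDeriv_pos ht.le

/-- `h(x) = (x − 5√x + 4)/24 − (√x/π)(log(16x) + 2)` is monotonically increasing
on `[10⁴, ∞)`. -/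
theorem h_strictMonoOn :
    StrictMonoOn
      (fun x : ℝ => (x - 5 * Real.sqrt x + 4) / 24
        - (Real.sqrt x / Real.pi) * (Real.log (16 * x) + 2))
      (Set.Ici (10 ^ 4 : ℝ)) := by
  have hsqrt : MapsTo sqrt (Ici (10 ^ 4)) (Ici 100) := fun x hx =>
    (le_sqrt (by norm_num) (by linarith [mem_Ici.mp hx])).mpr (by linarith [mem_Ici.mp hx])
  have hmono : StrictMonoOn sqrt (Ici (10 ^ 4 : ℝ)) :=
    strictMonoOn_sqrt.mono (Ici_subset_Ici.mpr (by norm_num))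
  exact (hOfSq_strictMonoOn.comp hmono hsqrt).congr fun x hx =>
    hOfSq_sqrt (by linarith [mem_Ici.mp hx])
end

section
/- Define h : ℝ → ℝ by h(x) = (x − 5√x + 4)/24 − (√x/π)·(log(16x) + 2), and let f(x) = h(180^x) − x. Then f is monotonically increasing on [2, ∞) and f(7) > 0; consequently, for every real r ≥ 7, h(180^r) > r. -/
/-!
Put `v = √(180^x) = 180^(x/2)`. Then `f(x) = (v² - 5v + 4)/24 - (v/π)(log 16 + x log 180 + 2) - x`
and `f'(x) = (v log 180 / 48)(2v - 5 - (24/π)(log 16 + x log 180 + 4)) - 1`. For `x ≥ 2`,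
convexity of `exp` gives `v ≥ 180 + 432 (x - 2)`, which beats the linear growth of the bracket,
so `f' > 0`; the same bound `v ≥ 2340` at `x = 7` makes `f(7) > 0`. Only the crude estimates
`4.8 < log 180 < 5.6`, `log 16 < 2.8` and `π > 3` are needed.
-/

open Real Set

/-- The function `h` of the genus bound `g₀⁺(p) ≥ h(p)`; `genusExcess` is `f`. -/
noncomputable def genusLowerBound (x : ℝ) : ℝ :=
  (x - 5 * √x + 4) / 24 - (√x / π) * (log (16 * x) + 2)

noncomputable def genusExcess (r : ℝ) : ℝ := genusLowerBound (180 ^ r) - r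

lemma log_180_gt : 4.8 < log 180 := by
  have h := log_lt_log (by norm_num) (show (2 : ℝ) ^ 7 < 180 by norm_num)
  rw [log_pow] at h
  push_cast at h
  linarith [log_two_gt_d9]

lemma log_180_lt : log 180 < 5.6 := by
  have h := log_lt_log (by norm_num) (show (180 : ℝ) < 2 ^ 8 by norm_num)
  rw [log_pow] at h
  push_cast at h
  linarith [log_two_lt_d9]

lemma log_16_lt : log 16 < 2.8 := by
  have h : log 16 = 4 * log 2 := by
    rw [show (16 : ℝ) = 2 ^ 4 by norm_num, log_pow]
    norm_num
  linarith [log_two_lt_d9]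

lemma sqrt_rpow_eq_rpow_half {a : ℝ} (ha : 0 ≤ a) (x : ℝ) : √(a ^ x) = a ^ (x / 2) := by
  rw [sqrt_eq_rpow, ← rpow_mul ha]
  ring_nf

lemma rpow_half_sq {a : ℝ} (ha : 0 ≤ a) (x : ℝ) : (a ^ (x / 2)) ^ 2 = a ^ x := by
  rw [← rpow_natCast, ← rpow_mul ha]
  norm_num

lemma log_mul_rpow {c a : ℝ} (hc : 0 < c) (ha : 0 < a) (x : ℝ) :
    log (c * a ^ x) = log c + x * log a := by
  rw [log_mul hc.ne' (rpow_pos_of_pos ha x).ne', log_rpow ha]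

lemma genusExcess_eq (x : ℝ) :
    genusExcess x = (((180 : ℝ) ^ (x / 2)) ^ 2 - 5 * 180 ^ (x / 2) + 4) / 24
      - (180 ^ (x / 2) / π) * (log 16 + x * log 180 + 2) - x := by
  rw [genusExcess, genusLowerBound, sqrt_rpow_eq_rpow_half (by norm_num),
    log_mul_rpow (by norm_num) (by norm_num), rpow_half_sq (by norm_num)]

lemma hasDerivAt_genusExcess (x : ℝ) :
    HasDerivAt genusExcess (log 180 * 180 ^ (x / 2) / 48
      * (2 * 180 ^ (x / 2) - 5 - 24 / π * (log 16 + x * log 180 + 4)) - 1) x := by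
  have hv : HasDerivAt (fun x : ℝ => (180 : ℝ) ^ (x / 2)) (180 ^ (x / 2) * log 180 / 2) x := by
    simpa [Function.comp_def, div_eq_mul_inv, mul_assoc] using
      (hasStrictDerivAt_const_rpow (by norm_num : (0 : ℝ) < 180) (x / 2)).hasDerivAt.comp x
        ((hasDerivAt_id x).div_const 2)
  have hlin : HasDerivAt (fun x : ℝ => log 16 + x * log 180 + 2) (log 180) x := by
    simpa using (((hasDerivAt_id x).mul_const (log 180)).const_add (log 16)).add_const 2
  have hclosed := (((((hv.pow 2).sub (hv.const_mul 5)).add_const 4).div_const 24).sub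
    ((hv.div_const π).mul hlin)).sub (hasDerivAt_id x)
  refine (hclosed.congr_of_eventuallyEq (.of_forall genusExcess_eq)).congr_deriv ?_
  norm_num
  ring

lemma linear_le_rpow_half_180 {x : ℝ} (hx : 2 ≤ x) : 180 + 432 * (x - 2) ≤ (180 : ℝ) ^ (x / 2) := by
  have hsplit : (180 : ℝ) ^ (x / 2) = 180 * exp (log 180 * ((x - 2) / 2)) := by
    rw [rpow_def_of_pos (by norm_num),
      show log 180 * (x / 2) = log 180 + log 180 * ((x - 2) / 2) by ring, exp_add,
      exp_log (by norm_num)]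
  have hexp := add_one_le_exp (log 180 * ((x - 2) / 2))
  nlinarith [log_180_gt]

lemma genusExcess_deriv_pos {x : ℝ} (hx : 2 ≤ x) :
    0 < log 180 * 180 ^ (x / 2) / 48
      * (2 * 180 ^ (x / 2) - 5 - 24 / π * (log 16 + x * log 180 + 4)) - 1 := by
  have hv := linear_le_rpow_half_180 hx
  set v := (180 : ℝ) ^ (x / 2)
  set S := log 16 + x * log 180 + 4
  have hS_pos : 0 < S := by
    have : 0 < log 16 := log_pos (by norm_num)
    nlinarith [log_180_gt]
  have hS_le : S ≤ 6.8 + 5.6 * x := by nlinarith [log_16_lt, log_180_lt]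
  have hπS : 24 / π * S ≤ 8 * S := by
    gcongr
    rw [div_le_iff₀ pi_pos]
    linarith [pi_gt_three]
  have hbracket : 200 ≤ 2 * v - 5 - 24 / π * S := by linarith
  have hfactor : 18 ≤ log 180 * v / 48 := by nlinarith [log_180_gt]
  nlinarith [mul_le_mul hfactor hbracket (by norm_num) (by linarith)]

lemma genusExcess_strictMonoOn : StrictMonoOn genusExcess (Ici 2) := by
  refine strictMonoOn_of_hasDerivWithinAt_pos (convex_Ici 2)
    (fun x _ => (hasDerivAt_genusExcess x).continuousAt.continuousWithinAt)
    (fun x _ => (hasDerivAt_genusExcess x).hasDerivWithinAt) fun x hx => ?_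
  rw [interior_Ici] at hx
  exact genusExcess_deriv_pos (le_of_lt hx)

lemma genusExcess_seven_pos : 0 < genusExcess 7 := by
  have hv : 2340 ≤ (180 : ℝ) ^ ((7 : ℝ) / 2) := by
    linarith [linear_le_rpow_half_180 (x := 7) (by norm_num)]
  rw [genusExcess_eq]
  set v := (180 : ℝ) ^ ((7 : ℝ) / 2)
  set S := log 16 + 7 * log 180 + 2
  have hS_pos : 0 < S := by
    have : 0 < log 16 := log_pos (by norm_num)
    linarith [log_180_gt]
  have hS_le : S ≤ 44 := by linarith [log_16_lt, log_180_lt]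
  have hvπ : v / π ≤ v / 3 := div_le_div_of_nonneg_left (by linarith) (by norm_num) pi_gt_three.le
  nlinarith [mul_le_mul hvπ hS_le hS_pos.le (by linarith)]

/-- With `h(x) = (x − 5√x + 4)/24 − (√x/π)(log(16x) + 2)` and
`f(x) = h(180^x) − x`, the function `f` is monotonically increasing on `[2, ∞)`
and `f(7) > 0`; consequently `h(180^r) > r` for all real `r ≥ 7`. -/
theorem f_strictMonoOn_and_pos :
    StrictMonoOn
      (fun x : ℝ =>
        (((180 : ℝ) ^ x - 5 * Real.sqrt ((180 : ℝ) ^ x) + 4) / 24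
          - (Real.sqrt ((180 : ℝ) ^ x) / Real.pi)
              * (Real.log (16 * (180 : ℝ) ^ x) + 2)) - x)
      (Set.Ici (2 : ℝ)) ∧
    (((180 : ℝ) ^ (7 : ℝ) - 5 * Real.sqrt ((180 : ℝ) ^ (7 : ℝ)) + 4) / 24
      - (Real.sqrt ((180 : ℝ) ^ (7 : ℝ)) / Real.pi)
          * (Real.log (16 * (180 : ℝ) ^ (7 : ℝ)) + 2)) - 7 > 0 ∧
    ∀ r : ℝ, 7 ≤ r →
      (((180 : ℝ) ^ r - 5 * Real.sqrt ((180 : ℝ) ^ r) + 4) / 24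
        - (Real.sqrt ((180 : ℝ) ^ r) / Real.pi)
            * (Real.log (16 * (180 : ℝ) ^ r) + 2)) > r := by
  refine ⟨genusExcess_strictMonoOn, genusExcess_seven_pos, fun r hr => ?_⟩
  have hr2 : r ∈ Ici (2 : ℝ) := le_trans (by norm_num) hr
  have hmono := genusExcess_strictMonoOn.monotoneOn (by norm_num : (7 : ℝ) ∈ Ici 2) hr2 hr
  exact sub_pos.mp (genusExcess_seven_pos.trans_le hmono)
end
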